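/- arXiv:2605.15950 — 5 statements merged into one kernel-verified Lean document; each statement's English description precedes it below -/
import Mathlib

section
/- Let P > 0 and v ≥ 0 be real numbers, and let A be a real number with 0 < A < 2P + v. Define h : (−∞, 0) → ℝ by h(θ) = θ A − (P + v) θ / (1 − θ P) + log(1 − θ P), and set θ* = (2A − P − √(P² + 4A(P + v))) / (2AP). Then θ* < 0 and h(θ) ≤ h(θ*) for all θ < 0; that is, h attains its maximum over (−∞, 0) at θ*. -/
/-!
With `u = 1 - θ P > 1`, the derivative is `h' θ = (A u² - P u - (P + v)) / u²`. The quadratic has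
roots `(P ± S) / (2A)` with `S = √(P² + 4A(P + v))`, and `A < 2P + v` is exactly `|2A - P| < S`:
the smaller root lies below `1`, the larger one is `1 - θ* P > 1`. So `h' ≥ 0` left of `θ*` and
`h' ≤ 0` right of it.
-/

open Real Set

theorem isMaxOn_Iio_of_hasDerivAt {f f' : ℝ → ℝ} {a c : ℝ} (hca : c < a)
    (hf : ∀ x < a, HasDerivAt f (f' x) x) (hleft : ∀ x < c, 0 ≤ f' x)
    (hright : ∀ x, c < x → x < a → f' x ≤ 0) : IsMaxOn f (Iio a) c := by
  have hcont : ContinuousOn f (Iio a) := fun x hx => (hf x hx).continuousAt.continuousWithinAt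
  intro x (hx : x < a)
  rcases le_total x c with hxc | hcx
  · have hmono : MonotoneOn f (Iic c) :=
      monotoneOn_of_hasDerivWithinAt_nonneg (convex_Iic c) (hcont.mono (Iic_subset_Iio.2 hca))
        (fun y hy => (hf y ((interior_Iic.subset hy).trans hca)).hasDerivWithinAt)
        (fun y hy => hleft y (interior_Iic.subset hy))
    exact hmono hxc self_mem_Iic hxc
  · have hanti : AntitoneOn f (Ico c a) :=
      antitoneOn_of_hasDerivWithinAt_nonpos (convex_Ico c a) (hcont.mono Ico_subset_Iio_self)
        (fun y hy => (hf y (interior_Ico.subset hy).2).hasDerivWithinAt)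
        (fun y hy => hright y (interior_Ico.subset hy).1 (interior_Ico.subset hy).2)
    exact hanti (left_mem_Ico.2 hca) ⟨hcx, hx⟩ hcx

theorem hasDerivAt_gmi {P v A θ : ℝ} (hθ : 1 - θ * P ≠ 0) :
    HasDerivAt (fun θ => θ * A - (P + v) * θ / (1 - θ * P) + log (1 - θ * P))
      ((A * (1 - θ * P) ^ 2 - P * (1 - θ * P) - (P + v)) / (1 - θ * P) ^ 2) θ := by
  have hu : HasDerivAt (fun θ : ℝ => 1 - θ * P) (-P) θ := by
    simpa using ((hasDerivAt_id θ).mul_const P).const_sub 1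
  have hlin : HasDerivAt (fun θ : ℝ => (P + v) * θ) (P + v) θ := by
    simpa using (hasDerivAt_id θ).const_mul (P + v)
  refine ((((hasDerivAt_id θ).mul_const A).sub (hlin.div hu hθ)).add (hu.log hθ)).congr_deriv ?_
  have hθ' : 1 - P * θ ≠ 0 := by rwa [mul_comm]
  field_simp
  ring

theorem identity_rule_gmi_argmax_general (P v A : ℝ) (hP : 0 < P)
    (hA : 0 < A) (hA' : A < 2 * P + v)
    (h : ℝ → ℝ)
    (hh : ∀ θ : ℝ, h θ = θ * A - (P + v) * θ / (1 - θ * P) + Real.log (1 - θ * P))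
    (θs : ℝ)
    (hθs : θs = (2 * A - P - Real.sqrt (P ^ 2 + 4 * A * (P + v))) / (2 * A * P)) :
    θs < 0 ∧ ∀ θ : ℝ, θ < 0 → h θ ≤ h θs := by
  set S := √(P ^ 2 + 4 * A * (P + v))
  -- `S² - (2A - P)² = 4A (2P + v - A) > 0`
  have hS : |2 * A - P| < S := (lt_sqrt (abs_nonneg _)).2 (by rw [sq_abs]; nlinarith)
  obtain ⟨hS_left, hS_right⟩ := abs_lt.1 hS
  have hS_sq : S ^ 2 = P ^ 2 + 4 * A * (P + v) := sq_sqrt (by nlinarith [sq_nonneg (2 * A - P)])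
  have hθs_neg : θs < 0 := hθs ▸ div_neg_of_neg_of_pos (by linarith) (by positivity)
  have hderiv : ∀ x < 0, HasDerivAt h
      ((θs - x) * (A * P * (1 - x * P - (P - S) / (2 * A)) / (1 - x * P) ^ 2)) x := by
    intro x hx
    have hu : 0 < 1 - x * P := by nlinarith
    rw [show h = _ from funext hh]
    convert hasDerivAt_gmi (v := v) (A := A) hu.ne' using 1
    rw [mul_div_assoc', div_left_inj' (pow_ne_zero 2 hu.ne'), hθs]
    field_simp
    linear_combination (-1) * hS_sq
  have hweight : ∀ x < 0, 0 < A * P * (1 - x * P - (P - S) / (2 * A)) / (1 - x * P) ^ 2 := by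
    intro x hx
    have : (P - S) / (2 * A) < 1 := by rw [div_lt_one (by positivity)]; linarith
    exact div_pos (mul_pos (by positivity) (by nlinarith)) (pow_pos (by nlinarith) 2)
  refine ⟨hθs_neg, fun θ hθ =>
    isMaxOn_Iio_of_hasDerivAt hθs_neg hderiv (fun x hx => ?_) (fun x hx hx0 => ?_) hθ⟩
  · exact mul_nonneg (sub_nonneg.2 hx.le) (hweight x (hx.trans hθs_neg)).le
  · exact mul_nonpos_of_nonpos_of_nonneg (sub_nonpos.2 hx.le) (hweight x hx0).le

/-- Maximization of the GMI objective of the identity decoding rule for the phase noise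
channel: for `P > 0`, `v ≥ 0` and `0 < A < 2P + v`, the function
`h θ = θ A - (P + v) θ / (1 - θ P) + log (1 - θ P)` attains its maximum over `(-∞, 0)` at
`θ* = (2A - P - √(P² + 4A(P + v))) / (2AP)`, and `θ* < 0`. -/
theorem identity_rule_gmi_argmax (P v A : ℝ) (hP : 0 < P) (hv : 0 ≤ v)
    (hA : 0 < A) (hA' : A < 2 * P + v)
    (h : ℝ → ℝ)
    (hh : ∀ θ : ℝ, h θ = θ * A - (P + v) * θ / (1 - θ * P) + Real.log (1 - θ * P))
    (θs : ℝ)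
    (hθs : θs = (2 * A - P - Real.sqrt (P ^ 2 + 4 * A * (P + v))) / (2 * A * P)) :
    θs < 0 ∧ ∀ θ : ℝ, θ < 0 → h θ ≤ h θs :=
  identity_rule_gmi_argmax_general P v A hP hA hA' h hh θs hθs
end

section
/- Fix real numbers v > 0 and s with 0 < s < 2. For P > 0 define A(P) = v + sP, θ*(P) = (2A(P) − P − √(P² + 4A(P)(P + v))) / (2A(P)P), and I(P) = θ*(P) A(P) − (P + v) θ*(P) / (1 − θ*(P) P) + log(1 − θ*(P) P). Then I(P) converges to s + 1 − √(1 + 4s) + log(2 / (√(1 + 4s) − 1)) as P → ∞. -/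
open Filter

/-- High-SNR saturation of the GMI of the identity decoding rule for the phase noise channel:
with `A(P) = v + s P`, `θ*(P) = (2A(P) - P - √(P² + 4A(P)(P + v))) / (2A(P)P)` and
`I(P) = θ*(P) A(P) - (P + v) θ*(P) / (1 - θ*(P) P) + log (1 - θ*(P) P)`, one has
`I(P) → s + 1 - √(1 + 4s) + log (2 / (√(1 + 4s) - 1))` as `P → ∞`. -/
theorem identity_rule_gmi_limit (v s : ℝ) (hv : 0 < v) (hs0 : 0 < s) (hs2 : s < 2) :
    Tendsto (fun P : ℝ =>
        let A := v + s * P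
        let θ := (2 * A - P - Real.sqrt (P ^ 2 + 4 * A * (P + v))) / (2 * A * P)
        θ * A - (P + v) * θ / (1 - θ * P) + Real.log (1 - θ * P))
      atTop
      (nhds (s + 1 - Real.sqrt (1 + 4 * s) +
        Real.log (2 / (Real.sqrt (1 + 4 * s) - 1)))) := by
  set r := Real.sqrt (1 + 4 * s) with hr
  have hr1 : 1 < r := by
    have : Real.sqrt 1 < Real.sqrt (1 + 4 * s) :=
      Real.sqrt_lt_sqrt (by norm_num) (by linarith)
    simpa using this
  have hr2 : r ^ 2 = 1 + 4 * s := Real.sq_sqrt (by linarith)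
  -- auxiliary functions in the variable u = 1/P
  set a : ℝ → ℝ := fun u => v * u + s with ha
  set t : ℝ → ℝ := fun u =>
    (2 * a u - 1 - Real.sqrt (1 + 4 * a u * (1 + v * u))) / (2 * a u) with ht
  set g : ℝ → ℝ := fun u =>
    t u * a u - (1 + v * u) * t u / (1 - t u) + Real.log (1 - t u) with hg
  have ha0 : a 0 = s := by simp [ha]
  have ht0 : t 0 = (2 * s - 1 - r) / (2 * s) := by
    simp only [ht, ha0]
    norm_num [hr]
  have h1t0 : 1 - t 0 = (1 + r) / (2 * s) := by
    rw [ht0]; field_simp; ring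
  have h1t0pos : 0 < 1 - t 0 := by
    rw [h1t0]; positivity
  -- continuity of g at 0
  have hconta : ContinuousAt a 0 := by fun_prop
  have hcontt : ContinuousAt t 0 := by
    apply ContinuousAt.div
    · apply ContinuousAt.sub
      apply ContinuousAt.sub
      · fun_prop
      · exact continuousAt_const
      · exact (Real.continuous_sqrt.continuousAt).comp (by fun_prop)
    · fun_prop
    · rw [ha0]; positivity
  have hcontg : ContinuousAt g 0 := by
    apply ContinuousAt.add
    · apply ContinuousAt.sub
      · exact hcontt.mul hconta
      · exact ContinuousAt.div (by fun_prop) (by fun_prop) (by positivity)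
    · exact (Real.continuousAt_log (by positivity)).comp
        (continuousAt_const.sub hcontt)
  have hcomp : Tendsto (fun P : ℝ => g P⁻¹) atTop (nhds (g 0)) :=
    hcontg.tendsto.comp tendsto_inv_atTop_zero
  -- value of the limit
  have hg0 : g 0 = s + 1 - r + Real.log (2 / (r - 1)) := by
    have hlog : (1 + r) / (2 * s) = 2 / (r - 1) := by
      rw [div_eq_div_iff (by positivity) (by linarith)]
      linear_combination hr2
    have hmain : t 0 * a 0 - (1 + v * 0) * t 0 / (1 - t 0) = s + 1 - r := by
      rw [ha0, h1t0, ht0]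
      field_simp
      ring_nf
      nlinarith [hr2]
    simp only [hg]
    rw [hmain, h1t0, hlog]
  rw [← hg0]
  apply hcomp.congr'
  filter_upwards [eventually_ge_atTop 1] with P hP
  have hP0 : 0 < P := lt_of_lt_of_le one_pos hP
  have hA : 0 < v + s * P := by positivity
  have hau : a P⁻¹ = (v + s * P) / P := by
    simp only [ha]; field_simp
  have hq : Real.sqrt (1 + 4 * a P⁻¹ * (1 + v * P⁻¹)) =
      Real.sqrt (P ^ 2 + 4 * (v + s * P) * (P + v)) / P := by
    have h1 : 1 + 4 * a P⁻¹ * (1 + v * P⁻¹) =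
        (P ^ 2 + 4 * (v + s * P) * (P + v)) / P ^ 2 := by
      rw [hau]; field_simp
    rw [h1, Real.sqrt_div (by positivity), Real.sqrt_sq hP0.le]
  have htu : t P⁻¹ = ((2 * (v + s * P) - P -
      Real.sqrt (P ^ 2 + 4 * (v + s * P) * (P + v))) / (2 * (v + s * P) * P)) * P := by
    simp only [ht]
    rw [hq, hau]
    field_simp
  simp only [hg, htu, hau]
  set θ := (2 * (v + s * P) - P -
      Real.sqrt (P ^ 2 + 4 * (v + s * P) * (P + v))) / (2 * (v + s * P) * P) with hθ
  have e1 : θ * P * ((v + s * P) / P) = θ * (v + s * P) := by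
    field_simp
  have e2 : (1 + v * P⁻¹) * (θ * P) = (P + v) * θ := by
    field_simp
  rw [e1, e2]
end

section
/- The following integral identity holds: ∫₀² (log(2/t) + t/2 − 1) · (1/2) e^{−t/2} dt = γ − e^{−1} + ∫₁^∞ e^{−t}/t dt, where γ is the Euler–Mascheroni constant. (Here (1/2)e^{−t/2} on (0,∞) is the density of the chi-squared distribution with 2 degrees of freedom.) -/
/-!
Substituting `t = 2u` turns the left-hand side into `∫₀¹ (-log u + u - 1) e^{-u} du`. The part
`(u - 1) e^{-u}` has primitive `-u e^{-u}` and contributes `-e⁻¹`. For the logarithmic part,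
`Γ'(1) = -γ` is the integral `∫₀^∞ log u e^{-u} du`, and integrating by parts on `(1, ∞)` turns
`∫₁^∞ log u e^{-u} du` into `E₁(1)`.
-/

open Real MeasureTheory Set Filter Topology

lemma intervalIntegrable_log_mul_exp_neg (a b : ℝ) :
    IntervalIntegrable (fun t => log t * exp (-t)) volume a b :=
  intervalIntegral.intervalIntegrable_log'.mul_continuousOn (by fun_prop)

lemma integrableOn_log_mul_exp_neg_Ioi_one :
    IntegrableOn (fun t => log t * exp (-t)) (Ioi 1) := by
  have hGamma : IntegrableOn (fun t : ℝ => exp (-t) * t ^ ((2 : ℝ) - 1)) (Ioi 1) :=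
    (GammaIntegral_convergent two_pos).mono_set (Ioi_subset_Ioi zero_le_one)
  refine hGamma.mono' (by fun_prop) ?_
  filter_upwards [ae_restrict_mem measurableSet_Ioi] with t (ht : 1 < t)
  have hlog_le : log t ≤ t := (log_le_sub_one_of_pos (by linarith)).trans (by linarith)
  rw [norm_mul, norm_of_nonneg (log_nonneg ht.le), norm_of_nonneg (exp_pos _).le,
    show (2 : ℝ) - 1 = 1 by norm_num, rpow_one, mul_comm (exp _)]
  gcongr

lemma integrableOn_log_mul_exp_neg :
    IntegrableOn (fun t => log t * exp (-t)) (Ioi 0) := by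
  rw [← Ioc_union_Ioi_eq_Ioi zero_le_one]
  exact ((intervalIntegrable_log_mul_exp_neg 0 1).1).union integrableOn_log_mul_exp_neg_Ioi_one

lemma integrableOn_exp_neg_div_self {a : ℝ} (ha : 0 < a) :
    IntegrableOn (fun t => exp (-t) / t) (Ioi a) := by
  refine ((exp_neg_integrableOn_Ioi a one_pos).div_const a).mono'
    ((by fun_prop : Measurable fun t : ℝ => exp (-t) / t).aestronglyMeasurable) ?_
  filter_upwards [ae_restrict_mem measurableSet_Ioi] with t (ht : a < t)
  rw [norm_of_nonneg (div_nonneg (exp_pos _).le (ha.trans ht).le), neg_one_mul]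
  gcongr

lemma tendsto_log_mul_exp_neg_atTop :
    Tendsto (fun t => log t * exp (-t)) atTop (𝓝 0) := by
  refine squeeze_zero' ?_ ?_ (by simpa using tendsto_pow_mul_exp_neg_atTop_nhds_zero 1)
  · filter_upwards [eventually_ge_atTop 1] with t ht
    have := log_nonneg ht
    positivity
  · filter_upwards [eventually_gt_atTop 0] with t ht
    gcongr
    exact (log_le_sub_one_of_pos ht).trans (by linarith)

lemma integral_Ioi_log_mul_exp_neg {a : ℝ} (ha : 0 < a) :
    ∫ t in Ioi a, log t * exp (-t) = log a * exp (-a) + ∫ t in Ioi a, exp (-t) / t := by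
  have hlog : IntegrableOn (fun t => log t * exp (-t)) (Ioi a) :=
    integrableOn_log_mul_exp_neg.mono_set (Ioi_subset_Ioi ha.le)
  have hparts : ∫ t in Ioi a, (exp (-t) / t - log t * exp (-t)) = 0 - log a * exp (-a) := by
    refine integral_Ioi_of_hasDerivAt_of_tendsto'
      (fun x (hx : a ≤ x) => ((hasDerivAt_log (ha.trans_le hx).ne').fun_mul
        (hasDerivAt_neg x).exp).congr_deriv (by ring))
      ((integrableOn_exp_neg_div_self ha).sub hlog) tendsto_log_mul_exp_neg_atTop
  rw [integral_sub (integrableOn_exp_neg_div_self ha) hlog] at hparts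
  linarith

lemma integral_Ioi_log_mul_exp_neg_eq_neg_eulerMascheroniConstant :
    ∫ t in Ioi 0, log t * exp (-t) = -eulerMascheroniConstant := by
  set A := ∫ t in Ioi 0, log t * exp (-t)
  have hIntegral : HasDerivAt Complex.GammaIntegral (A : ℂ) 1 := by
    convert Complex.hasDerivAt_GammaIntegral (s := 1) (by simp) using 1
    simp only [sub_self, Complex.cpow_zero, one_mul, ← Complex.ofReal_mul]
    exact integral_ofReal.symm
  have hGamma : Complex.Gamma =ᶠ[𝓝 1] Complex.GammaIntegral := by
    filter_upwards [(isOpen_lt continuous_const Complex.continuous_re).mem_nhds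
      (by simp : (1 : ℂ) ∈ {s : ℂ | 0 < s.re})] with s hs
    exact Complex.Gamma_eq_integral hs
  have hReal : HasDerivAt Gamma A 1 := by
    simpa [Complex.Gamma_ofReal] using
      (Complex.ofReal_one ▸ hIntegral.congr_of_eventuallyEq hGamma).real_of_complex
  exact hReal.unique hasDerivAt_Gamma_one

lemma integral_zero_log_mul_exp_neg {a : ℝ} (ha : 0 < a) :
    ∫ t in (0 : ℝ)..a, log t * exp (-t) =
      -eulerMascheroniConstant - log a * exp (-a) - ∫ t in Ioi a, exp (-t) / t := by
  have hsplit := setIntegral_union (Ioc_disjoint_Ioi le_rfl) measurableSet_Ioi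
    (intervalIntegrable_log_mul_exp_neg 0 a).1
    (integrableOn_log_mul_exp_neg.mono_set (Ioi_subset_Ioi ha.le))
  rw [Ioc_union_Ioi_eq_Ioi ha.le, integral_Ioi_log_mul_exp_neg_eq_neg_eulerMascheroniConstant,
    integral_Ioi_log_mul_exp_neg ha] at hsplit
  rw [intervalIntegral.integral_of_le ha.le]
  linarith

lemma integral_sub_one_mul_exp_neg (a b : ℝ) :
    ∫ t in a..b, (t - 1) * exp (-t) = a * exp (-a) - b * exp (-b) := by
  have hderiv (x : ℝ) : HasDerivAt (fun t => -t * exp (-t)) ((x - 1) * exp (-x)) x :=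
    ((hasDerivAt_neg x).fun_mul (hasDerivAt_neg x).exp).congr_deriv (by ring)
  rw [intervalIntegral.integral_eq_sub_of_hasDerivAt (fun x _ => hderiv x)
    (Continuous.intervalIntegrable (by fun_prop) a b)]
  ring

/-- High-SNR saturation value of the element-wise GNNDR GMI on the block noncoherent AWGN
channel: `∫₀² (log (2/t) + t/2 - 1) · (1/2) e^{-t/2} dt = γ - e⁻¹ + E₁(1)`, where `γ` is the
Euler–Mascheroni constant and `E₁(1) = ∫₁^∞ e^{-t}/t dt`. -/
theorem elementwise_gmi_saturation :
    ∫ t in (0:ℝ)..2, (Real.log (2 / t) + t / 2 - 1) * ((1 / 2) * Real.exp (-t / 2)) =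
      Real.eulerMascheroniConstant - Real.exp (-1) +
        ∫ t in Set.Ioi (1:ℝ), Real.exp (-t) / t := by
  have hsubst : ∫ t in (0 : ℝ)..2, (log (2 / t) + t / 2 - 1) * ((1 / 2) * exp (-t / 2)) =
      ∫ u in (0 : ℝ)..1, ((u - 1) * exp (-u) - log u * exp (-u)) := by
    have hscale := intervalIntegral.smul_integral_comp_mul_left
      (fun t => (log (2 / t) + t / 2 - 1) * ((1 / 2) * exp (-t / 2))) 2 (a := 0) (b := 1)
    rw [mul_zero, mul_one] at hscale
    rw [← hscale, smul_eq_mul, ← intervalIntegral.integral_const_mul]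
    refine intervalIntegral.integral_congr fun u _ => ?_
    rw [div_mul_cancel_left₀ two_ne_zero, log_inv, show -(2 * u) / 2 = -u by ring]
    ring
  rw [hsubst, intervalIntegral.integral_sub (Continuous.intervalIntegrable (by fun_prop) 0 1)
    (intervalIntegrable_log_mul_exp_neg 0 1), integral_sub_one_mul_exp_neg,
    integral_zero_log_mul_exp_neg one_pos, log_one]
  ring
end

section
/- Fix a real number v > 0. Then, as P → ∞, the integral ∫₀² [log((P+v)/(v + P t/2)) + P(t − 2)/(2(P+v))] · (1/2) e^{−t/2} dt converges to ∫₀² (log(2/t) + t/2 − 1) · (1/2) e^{−t/2} dt. -/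
/-! Dominated convergence on `(0, 2]`. For `P ≥ 0` and `t ≤ 2` the ratio `(P + v) / (v + P t / 2)`
lies between `1` and `2 / t`, so the logarithmic term is dominated by `log (2 / t)`, which is
integrable at `0`; the linear term is bounded by `1` and the weight by `1 / 2`. Pointwise, both
terms are ratios of affine functions of `P` and converge to the ratio of the leading coefficients. -/

open Filter Real Set Topology
open scoped Interval

lemma tendsto_affine_div_affine_atTop {a b c d : ℝ} (hc : c ≠ 0) :
    Tendsto (fun x => (a * x + b) / (c * x + d)) atTop (𝓝 (a / c)) := by
  have hinv : Tendsto (fun x : ℝ => x⁻¹) atTop (𝓝 0) := tendsto_inv_atTop_zero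
  have hlim : Tendsto (fun x : ℝ => (a + b * x⁻¹) / (c + d * x⁻¹)) atTop
      (𝓝 ((a + b * 0) / (c + d * 0))) :=
    (tendsto_const_nhds.add (hinv.const_mul b)).div (tendsto_const_nhds.add (hinv.const_mul d))
      (by simpa using hc)
  simp only [mul_zero, add_zero] at hlim
  refine hlim.congr' ?_
  filter_upwards [eventually_gt_atTop 0] with x hx
  rw [← mul_div_mul_right _ _ hx.ne']
  congr 1 <;> field_simp

lemma abs_log_snr_ratio_le {P v t : ℝ} (hP : 0 ≤ P) (hv : 0 < v) (ht : t ∈ Ioc 0 2) :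
    |log ((P + v) / (v + P * t / 2))| ≤ log (2 / t) := by
  obtain ⟨ht0, ht2⟩ := ht
  have hden : 0 < v + P * t / 2 := by positivity
  have hratio_ge : 1 ≤ (P + v) / (v + P * t / 2) := by
    rw [one_le_div hden]; nlinarith
  have hratio_le : (P + v) / (v + P * t / 2) ≤ 2 / t := by
    rw [div_le_div_iff₀ hden ht0]; nlinarith
  rw [abs_of_nonneg (log_nonneg hratio_ge)]
  exact log_le_log (by linarith) hratio_le

lemma abs_mul_sub_two_div_le_one {P v t : ℝ} (hP : 0 ≤ P) (hv : 0 ≤ v) (ht : t ∈ Icc 0 2) :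
    |P * (t - 2) / (2 * (P + v))| ≤ 1 := by
  obtain ⟨ht0, ht2⟩ := ht
  rw [abs_div, abs_mul, abs_of_nonneg hP, abs_of_nonpos (by linarith : t - 2 ≤ 0),
    abs_of_nonneg (by positivity : 0 ≤ 2 * (P + v))]
  exact div_le_one_of_le₀ (by nlinarith) (by positivity)

lemma norm_gmi_integrand_le {P v t : ℝ} (hP : 0 ≤ P) (hv : 0 < v) (ht : t ∈ Ioc 0 2) :
    ‖(log ((P + v) / (v + P * t / 2)) + P * (t - 2) / (2 * (P + v))) * ((1 / 2) * exp (-t / 2))‖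
      ≤ (log 2 - log t + 1) * (1 / 2) := by
  have hlog := abs_log_snr_ratio_le hP hv ht
  have hlin := abs_mul_sub_two_div_le_one hP hv.le (Ioc_subset_Icc_self ht)
  have hweight : exp (-t / 2) ≤ 1 := exp_le_one_iff.mpr (by linarith [ht.1])
  rw [log_div two_ne_zero ht.1.ne'] at hlog
  rw [Real.norm_eq_abs, abs_mul, abs_of_nonneg (by positivity : 0 ≤ (1 / 2 : ℝ) * exp (-t / 2))]
  refine mul_le_mul ((abs_add_le _ _).trans (add_le_add hlog hlin)) (by linarith)
    (by positivity) ?_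
  linarith [abs_nonneg (log ((P + v) / (v + P * t / 2)))]

lemma tendsto_gmi_integrand {v t : ℝ} (ht : t ≠ 0) :
    Tendsto (fun P => (log ((P + v) / (v + P * t / 2)) + P * (t - 2) / (2 * (P + v))) *
      ((1 / 2) * exp (-t / 2))) atTop
      (𝓝 ((log (2 / t) + t / 2 - 1) * ((1 / 2) * exp (-t / 2)))) := by
  have hratio : Tendsto (fun P => (P + v) / (v + P * t / 2)) atTop (𝓝 (2 / t)) := by
    convert tendsto_affine_div_affine_atTop (a := 1) (b := v) (d := v) (div_ne_zero ht two_ne_zero)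
      using 2 <;> ring
  have hlin : Tendsto (fun P => P * (t - 2) / (2 * (P + v))) atTop (𝓝 (t / 2 - 1)) := by
    convert tendsto_affine_div_affine_atTop (a := t - 2) (b := 0) (d := 2 * v) two_ne_zero
      using 2 <;> ring
  simpa only [add_sub_assoc] using
    ((hratio.log (div_ne_zero two_ne_zero ht)).add hlin).mul_const ((1 / 2) * exp (-t / 2))

/-- As the signal power `P → ∞`, the GMI of element-wise GNNDR on the block noncoherent AWGN
channel with noise variance `v > 0`,
`∫₀² (log ((P+v)/(v + P t/2)) + P(t-2)/(2(P+v))) · (1/2) e^{-t/2} dt`, converges to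
`∫₀² (log (2/t) + t/2 - 1) · (1/2) e^{-t/2} dt`. -/
theorem elementwise_gmi_tendsto (v : ℝ) (hv : 0 < v) :
    Tendsto (fun P : ℝ =>
        ∫ t in (0:ℝ)..2,
          (Real.log ((P + v) / (v + P * t / 2)) + P * (t - 2) / (2 * (P + v))) *
            ((1 / 2) * Real.exp (-t / 2)))
      atTop
      (nhds (∫ t in (0:ℝ)..2,
        (Real.log (2 / t) + t / 2 - 1) * ((1 / 2) * Real.exp (-t / 2)))) := by
  have huIoc : Ι (0 : ℝ) 2 = Ioc 0 2 := uIoc_of_le zero_le_two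
  refine intervalIntegral.tendsto_integral_filter_of_dominated_convergence
    (fun t => (log 2 - log t + 1) * (1 / 2)) ?_ ?_ ?_ ?_
  · exact Eventually.of_forall fun P => by fun_prop
  · filter_upwards [eventually_ge_atTop 0] with P hP
    exact Eventually.of_forall fun t ht => norm_gmi_integrand_le hP hv (huIoc ▸ ht)
  · exact ((intervalIntegrable_const.sub intervalIntegral.intervalIntegrable_log').add
      intervalIntegrable_const).mul_const _
  · exact Eventually.of_forall fun t ht => tendsto_gmi_integrand (huIoc ▸ ht).1.ne'
end

section
/- Let P > 0 be real, let B be an n×m complex matrix, and let D be an invertible m×m complex matrix such that both D − P⁻¹ Bᴴ B and P·I_n − B D⁻¹ Bᴴ are invertible. Then det(I_n + P⁻¹ B (D − P⁻¹ Bᴴ B)⁻¹ Bᴴ) = Pⁿ / det(P·I_n − B D⁻¹ Bᴴ). -/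
open Matrix

/-- Determinant identity (via the Sherman–Morrison–Woodbury formula) converting the
worst-case Bussgang rate into the linear-processing Vec-GNNDR GMI: for `P > 0`, an `n × m`
complex matrix `B` and an invertible `m × m` matrix `D` with `D - P⁻¹ Bᴴ B` and
`P·I - B D⁻¹ Bᴴ` invertible,
`det (I + P⁻¹ B (D - P⁻¹ Bᴴ B)⁻¹ Bᴴ) = Pⁿ / det (P·I - B D⁻¹ Bᴴ)`. -/
theorem woodbury_det_identity {n m : ℕ} (P : ℝ) (hP : 0 < P)
    (B : Matrix (Fin n) (Fin m) ℂ) (D : Matrix (Fin m) (Fin m) ℂ)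
    (hD : IsUnit D)
    (h1 : IsUnit (D - (P : ℂ)⁻¹ • (Bᴴ * B)))
    (h2 : IsUnit ((P : ℂ) • (1 : Matrix (Fin n) (Fin n) ℂ) - B * D⁻¹ * Bᴴ)) :
    Matrix.det ((1 : Matrix (Fin n) (Fin n) ℂ) +
        (P : ℂ)⁻¹ • (B * (D - (P : ℂ)⁻¹ • (Bᴴ * B))⁻¹ * Bᴴ)) =
      (P : ℂ) ^ n /
        Matrix.det ((P : ℂ) • (1 : Matrix (Fin n) (Fin n) ℂ) - B * D⁻¹ * Bᴴ) := by
  have hPc : (P : ℂ) ≠ 0 := by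
    exact_mod_cast (ne_of_gt hP)
  set E : Matrix (Fin m) (Fin m) ℂ := D - (P : ℂ)⁻¹ • (Bᴴ * B) with hE
  set M : Matrix (Fin n) (Fin n) ℂ := B * E⁻¹ * Bᴴ with hM
  set N : Matrix (Fin n) (Fin n) ℂ := B * D⁻¹ * Bᴴ with hN
  have hDdet : IsUnit D.det := (Matrix.isUnit_iff_isUnit_det D).mp hD
  have hEdet : IsUnit E.det := (Matrix.isUnit_iff_isUnit_det E).mp h1
  have h2det : IsUnit ((P : ℂ) • (1 : Matrix (Fin n) (Fin n) ℂ) - N).det :=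
    (Matrix.isUnit_iff_isUnit_det _).mp h2
  have hE1 : E * E⁻¹ = 1 := Matrix.mul_nonsing_inv E hEdet
  have hD1 : D⁻¹ * D = 1 := Matrix.nonsing_inv_mul D hDdet
  have hBB : Bᴴ * B = (P : ℂ) • (D - E) := by
    rw [hE, sub_sub_cancel, smul_smul, mul_inv_cancel₀ hPc, one_smul]
  have hNM : N * M = (P : ℂ) • (M - N) := by
    have step : N * M = B * (D⁻¹ * (Bᴴ * B) * E⁻¹) * Bᴴ := by
      rw [hN, hM]; simp only [Matrix.mul_assoc]
    have h3 : D⁻¹ * ((P : ℂ) • (D - E)) * E⁻¹ = (P : ℂ) • (E⁻¹ - D⁻¹) := by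
      rw [Matrix.mul_smul, Matrix.smul_mul, mul_sub, hD1, sub_mul, one_mul,
        Matrix.mul_assoc, hE1, Matrix.mul_one]
    rw [step, hBB, h3, Matrix.mul_smul, Matrix.smul_mul, Matrix.mul_sub,
      Matrix.sub_mul, hM, hN]
  have key : ((P : ℂ) • (1 : Matrix (Fin n) (Fin n) ℂ) - N) *
      ((1 : Matrix (Fin n) (Fin n) ℂ) + (P : ℂ)⁻¹ • M) = (P : ℂ) • 1 := by
    rw [sub_mul, mul_add, mul_add, Matrix.mul_one, Matrix.mul_one]
    simp only [Matrix.mul_smul, Matrix.smul_mul, Matrix.one_mul, smul_smul]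
    rw [hNM]
    simp only [smul_smul, inv_mul_cancel₀ hPc, mul_inv_cancel₀ hPc, one_smul, one_mul]
    abel
  have hdet := congrArg Matrix.det key
  rw [Matrix.det_mul, Matrix.det_smul, Matrix.det_one, mul_one, Fintype.card_fin] at hdet
  rw [eq_div_iff (IsUnit.ne_zero h2det), mul_comm]
  exact hdet
end
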